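/- arXiv:1406.7107 — 4 statements merged into one kernel-verified Lean document; each statement's English description precedes it below -/
import Mathlib

section
/- In any sequence of moves transforming an initial lay-out into a target lay-out (all stacks non-increasing from the bottom), every container that is wrongly placed in the initial lay-out must be moved at least once. Hence the number of wrongly placed containers is a lower bound on the number of moves. -/
/-- A single move in a bay with `m` stacks of maximum height `h`: the move
`(src, dst, c)` picks up the top container `c` of stack `src` (stacks are
listed bottom to top) and places it on top of stack `dst`, whose height must
be below `h`; all other stacks are unchanged. -/
def IsMove {C : Type} (m h : ℕ) (L L' : Fin m → List C)
    (mv : Fin m × Fin m × C) : Prop :=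
  mv.1 ≠ mv.2.1 ∧ (L mv.2.1).length < h ∧
    L mv.1 = L' mv.1 ++ [mv.2.2] ∧ L' mv.2.1 = L mv.2.1 ++ [mv.2.2] ∧
    ∀ s, s ≠ mv.1 → s ≠ mv.2.1 → L' s = L s

/-- `Plays m h L ms L'` : the sequence of moves `ms` transforms lay-out `L`
into lay-out `L'`. -/
inductive Plays {C : Type} (m h : ℕ) :
    (Fin m → List C) → List (Fin m × Fin m × C) → (Fin m → List C) → Prop
  | nil (L : Fin m → List C) : Plays m h L [] L
  | cons {L L' L'' : Fin m → List C} {mv : Fin m × Fin m × C}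
      {ms : List (Fin m × Fin m × C)} :
      IsMove m h L L' mv → Plays m h L' ms L'' → Plays m h L (mv :: ms) L''

/-- `Wrong x p` : the container at (0-indexed) position `p` of a stack with
priorities `x 0, x 1, ...` (bottom to top) is wrongly placed: some container
strictly below it has strictly smaller priority, or some container strictly
below it is itself wrongly placed. -/
inductive Wrong (x : ℕ → ℕ) : ℕ → Prop
  | base {p q : ℕ} : q < p → x q < x p → Wrong x p
  | above {p q : ℕ} : q < p → Wrong x q → Wrong x p

/-- The container at position `p` (0-indexed from the bottom) of the stack `X`
is wrongly placed, with priorities given by `pr`. -/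
def WrongIn {C : Type} (pr : C → ℕ) (X : List C) (p : ℕ) : Prop :=
  p < X.length ∧ Wrong (fun q => (X.map pr).getD q 0) p

/-- The number of wrongly placed containers in the lay-out `L`. -/
noncomputable def WCount {C : Type} {m : ℕ} (pr : C → ℕ)
    (L : Fin m → List C) : ℕ :=
  ∑ s : Fin m, Nat.card {p : ℕ // WrongIn pr (L s) p}

/-!
A container that is never moved keeps, throughout the play, every container below it, and
whether it is wrongly placed depends only on the priorities at and below it. So a wrongly
placed container that is never moved is still wrongly placed in the final lay-out, which is
impossible in a target lay-out. Since containers are distinct, distinct wrongly placed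
containers are distinct moved containers, and there are at most as many of these as moves.
-/

namespace Wrong

variable {x y : ℕ → ℕ} {p : ℕ}

theorem of_eq_of_le (hxy : ∀ q ≤ p, x q = y q) (hw : Wrong x p) : Wrong y p := by
  induction hw with
  | base hqp hlt => exact .base hqp (by rwa [← hxy _ le_rfl, ← hxy _ hqp.le])
  | above hqp _ ih => exact .above hqp (ih fun r hr => hxy r (hr.trans hqp.le))

theorem not_of_antitoneOn (hx : ∀ q r, q < r → r ≤ p → x r ≤ x q) : ¬ Wrong x p := by
  intro hw
  induction hw with
  | base hqp hlt => exact (hx _ _ hqp le_rfl).not_gt hlt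
  | above hqp _ ih => exact ih fun q r hqr hr => hx q r hqr (hr.trans hqp.le)

end Wrong

section WrongIn

variable {C : Type} (pr : C → ℕ) {X Y : List C} {p : ℕ}

theorem getD_map_eq_of_isPrefix (hXY : X <+: Y) {q : ℕ} (hq : q < X.length) :
    (X.map pr).getD q 0 = (Y.map pr).getD q 0 := by
  have hq' : q < (X.map pr).length := by simpa using hq
  rw [List.getD_eq_getElem _ _ hq', (hXY.map pr).getElem hq',
    ← List.getD_eq_getElem _ 0]

theorem wrongIn_iff_of_isPrefix (hXY : X <+: Y) (hp : p < X.length) :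
    WrongIn pr X p ↔ WrongIn pr Y p := by
  have hxy : ∀ q ≤ p, (X.map pr).getD q 0 = (Y.map pr).getD q 0 := fun q hq =>
    getD_map_eq_of_isPrefix pr hXY (hq.trans_lt hp)
  refine ⟨fun ⟨_, hw⟩ => ⟨hp.trans_le hXY.length_le, hw.of_eq_of_le hxy⟩,
    fun ⟨_, hw⟩ => ⟨hp, hw.of_eq_of_le fun q hq => (hxy q hq).symm⟩⟩

theorem not_wrongIn_of_pairwise (hX : X.Pairwise fun a b => pr b ≤ pr a) :
    ¬ WrongIn pr X p := by
  refine fun ⟨hp, hw⟩ => Wrong.not_of_antitoneOn (fun q r hqr hr => ?_) hw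
  have hr' : r < X.length := hr.trans_lt hp
  rw [List.getD_eq_getElem _ _ (by simpa using hr'),
    List.getD_eq_getElem _ _ (by simpa using hqr.trans hr'), List.getElem_map, List.getElem_map]
  exact hX.rel_get_of_lt (a := ⟨q, hqr.trans hr'⟩) (b := ⟨r, hr'⟩) hqr

end WrongIn

section Plays

variable {C : Type} {m h : ℕ}

theorem IsMove.isPrefix_of_ne {L L' : Fin m → List C} {mv : Fin m × Fin m × C}
    (hmv : IsMove m h L L' mv) {s : Fin m} {l : List C} {c : C}
    (hl : l ++ [c] <+: L s) (hc : c ≠ mv.2.2) : l ++ [c] <+: L' s := by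
  obtain ⟨_, _, hsrc, hdst, hother⟩ := hmv
  by_cases hs : s = mv.1
  · subst hs
    rw [hsrc, List.prefix_concat_iff] at hl
    refine hl.resolve_left fun heq => hc ?_
    simpa using congrArg List.getLast? heq
  by_cases hd : s = mv.2.1
  · subst hd
    exact hdst ▸ hl.trans (List.prefix_append _ _)
  · rwa [hother s hs hd]

theorem Plays.isPrefix_of_not_mem {L L' : Fin m → List C} {ms : List (Fin m × Fin m × C)}
    (hplay : Plays m h L ms L') {s : Fin m} {l : List C} {c : C}
    (hl : l ++ [c] <+: L s) (hc : c ∉ ms.map fun mv => mv.2.2) : l ++ [c] <+: L' s := by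
  induction hplay with
  | nil => exact hl
  | cons hmv _ ih =>
    simp only [List.map_cons, List.mem_cons, not_or] at hc
    exact ih (hmv.isPrefix_of_ne hl hc.1) hc.2

end Plays

theorem getElem_injective_of_nodup_flatten {C : Type} {m : ℕ} {L : Fin m → List C}
    (hnodup : (List.ofFn L).flatten.Nodup) {s s' : Fin m} {p p' : ℕ}
    (hp : p < (L s).length) (hp' : p' < (L s').length)
    (heq : (L s)[p] = (L s')[p']) : s = s' ∧ p = p' := by
  obtain ⟨hnd, hdisj⟩ := List.nodup_flatten.mp hnodup
  rw [List.pairwise_ofFn] at hdisj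
  rcases lt_trichotomy s s' with hlt | rfl | hlt
  · exact (hdisj hlt (List.getElem_mem hp) (heq ▸ List.getElem_mem hp')).elim
  · exact ⟨rfl, ((hnd _ (List.mem_ofFn.mpr ⟨s, rfl⟩)).getElem_inj_iff).mp heq⟩
  · exact (hdisj hlt (List.getElem_mem hp') (heq ▸ List.getElem_mem hp)).elim

theorem Plays.getElem_mem_of_wrongIn {C : Type} {m h : ℕ} (pr : C → ℕ)
    {L L' : Fin m → List C} {ms : List (Fin m × Fin m × C)} (hplay : Plays m h L ms L')
    (htarget : ∀ s, (L' s).Pairwise fun a b => pr b ≤ pr a) {s : Fin m} {p : ℕ}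
    (hw : WrongIn pr (L s) p) : (L s)[p]'hw.1 ∈ ms.map fun mv => mv.2.2 := by
  by_contra hc
  have hlen : p < ((L s).take (p + 1)).length := by simp [hw.1]
  have hfinal : (L s).take (p + 1) <+: L' s := by
    have hsplit := List.take_succ_eq_append_getElem hw.1
    rw [hsplit]
    exact hplay.isPrefix_of_not_mem (hsplit ▸ List.take_prefix _ _) hc
  have hprefix : WrongIn pr ((L s).take (p + 1)) p :=
    (wrongIn_iff_of_isPrefix pr (List.take_prefix _ _) hlen).mpr hw
  exact not_wrongIn_of_pairwise pr (htarget s)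
    ((wrongIn_iff_of_isPrefix pr hfinal hlen).mp hprefix)

instance {C : Type} (pr : C → ℕ) (X : List C) : Finite {p : ℕ // WrongIn pr X p} :=
  Finite.of_injective (fun p => (⟨p.1, p.2.1⟩ : Fin X.length))
    fun _ _ hpq => Subtype.ext (congrArg Fin.val hpq)

theorem wCount_le_length_of_getElem_mem {C : Type} {m : ℕ} (pr : C → ℕ) {L : Fin m → List C}
    (hnodup : (List.ofFn L).flatten.Nodup) (l : List C)
    (hl : ∀ s p (hw : WrongIn pr (L s) p), (L s)[p]'hw.1 ∈ l) : WCount pr L ≤ l.length := by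
  let container : (Σ s, {p : ℕ // WrongIn pr (L s) p}) → {c // c ∈ l} :=
    fun x => ⟨(L x.1)[x.2.1]'x.2.2.1, hl _ _ x.2.2⟩
  have hinj : container.Injective := by
    rintro ⟨s, p, hp⟩ ⟨s', p', hp'⟩ heq
    obtain ⟨rfl, rfl⟩ :=
      getElem_injective_of_nodup_flatten hnodup hp.1 hp'.1 (congrArg Subtype.val heq)
    rfl
  have hsurj : (fun i : Fin l.length => (⟨l[i], List.getElem_mem _⟩ : {c // c ∈ l})).Surjective :=
    fun ⟨_, hc⟩ => by
      obtain ⟨i, hi, rfl⟩ := List.mem_iff_getElem.mp hc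
      exact ⟨⟨i, hi⟩, rfl⟩
  have : Finite {c // c ∈ l} := .of_surjective _ hsurj
  calc WCount pr L = Nat.card (Σ s, {p : ℕ // WrongIn pr (L s) p}) := Nat.card_sigma.symm
    _ ≤ Nat.card {c // c ∈ l} := Nat.card_le_card_of_injective _ hinj
    _ ≤ Nat.card (Fin l.length) := Nat.card_le_card_of_surjective _ hsurj
    _ = l.length := Nat.card_fin _

theorem stmt7_general {C : Type} (m h : ℕ) (pr : C → ℕ)
    (L0 Lf : Fin m → List C) (ms : List (Fin m × Fin m × C))
    (hplay : Plays m h L0 ms Lf)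
    (htarget : ∀ s, (Lf s).Pairwise (fun a b => pr b ≤ pr a))
    (hnodup : (List.ofFn L0).flatten.Nodup) :
    (∀ s : Fin m, ∀ p : ℕ, WrongIn pr (L0 s) p → ∀ hp : p < (L0 s).length,
        (L0 s).get ⟨p, hp⟩ ∈ ms.map (fun mv => mv.2.2)) ∧
      WCount pr L0 ≤ ms.length := by
  have moved : ∀ s p (hw : WrongIn pr (L0 s) p), (L0 s)[p]'hw.1 ∈ ms.map fun mv => mv.2.2 :=
    fun _ _ hw => hplay.getElem_mem_of_wrongIn pr htarget hw
  refine ⟨fun s p hw _ => moved s p hw, ?_⟩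
  calc WCount pr L0 ≤ (ms.map fun mv => mv.2.2).length :=
        wCount_le_length_of_getElem_mem pr hnodup _ moved
    _ = ms.length := List.length_map _

/-- In any sequence of moves transforming an initial lay-out (with pairwise
distinct containers) into a target lay-out (all stacks non-increasing in
priority from the bottom), every container wrongly placed in the initial
lay-out is moved at least once; hence the number of wrongly placed containers
is a lower bound on the number of moves. -/
theorem stmt7 {C : Type} [DecidableEq C] (m h : ℕ) (pr : C → ℕ)
    (L0 Lf : Fin m → List C) (ms : List (Fin m × Fin m × C))
    (hplay : Plays m h L0 ms Lf)
    (htarget : ∀ s, (Lf s).Pairwise (fun a b => pr b ≤ pr a))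
    (hnodup : (List.ofFn L0).flatten.Nodup) :
    (∀ s : Fin m, ∀ p : ℕ, WrongIn pr (L0 s) p → ∀ hp : p < (L0 s).length,
        (L0 s).get ⟨p, hp⟩ ∈ ms.map (fun mv => mv.2.2)) ∧
      WCount pr L0 ≤ ms.length :=
  stmt7_general m h pr L0 Lf ms hplay htarget hnodup
end

section
/- Conversely to the previous direction: given a partition P_1,...,P_k of [n] into independent sets of the permutation graph of π with |P_j| ≤ m for all j, the move sequence that pops containers π(n),...,π(1) in that order from the source stack and places container π(i) onto destination stack j with i ∈ P_j is feasible (no destination stack exceeds m containers) and results in every destination stack being sorted in strictly decreasing order from the bottom. -/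
/-- The permutation graph of a permutation `π` of `Fin n`. -/
def permGraph (n : ℕ) (π : Equiv.Perm (Fin n)) : SimpleGraph (Fin n) where
  Adj i j := (i < j ∧ π j < π i) ∨ (j < i ∧ π i < π j)
  symm := by constructor; intro i j h; exact h.symm
  loopless := by constructor; intro i h; rcases h with ⟨h, _⟩ | ⟨h, _⟩ <;> exact lt_irrefl _ h

/-- The content (bottom to top, as priorities) of destination stack `j` after the
containers `π 1, ..., π n` (stacked bottom to top in the source stack) have been
popped in order `π n, ..., π 1` and container `π i` has been placed on stack `σ i`. -/
def destStack (n k : ℕ) (π : Equiv.Perm (Fin n)) (σ : Fin n → Fin k) (j : Fin k) :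
    List ℕ :=
  ((List.finRange n).reverse.filter (fun i => σ i = j)).map (fun i => (π i : ℕ))

section

variable {n : ℕ} (π : Equiv.Perm (Fin n))

theorem permGraph_adj_iff_of_lt {i j : Fin n} (hij : i < j) :
    (permGraph n π).Adj i j ↔ π j < π i := by
  simp [permGraph, hij, hij.not_gt]

theorem strictMonoOn_of_isIndepSet {s : Set (Fin n)} (hs : (permGraph n π).IsIndepSet s) :
    StrictMonoOn π s := by
  intro i hi j hj hij
  have hle : π i ≤ π j := not_lt.mp ((permGraph_adj_iff_of_lt π hij).not.mp (hs hi hj hij.ne))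
  exact hle.lt_of_ne (π.injective.ne hij.ne)

variable {k : ℕ} (σ : Fin n → Fin k) (j : Fin k)

theorem destStack_length :
    (destStack n k π σ j).length = (Finset.univ.filter (fun i => σ i = j)).card := by
  have hnodup : ((List.finRange n).reverse.filter (fun i => σ i = j)).Nodup :=
    (List.nodup_reverse.mpr (List.nodup_finRange n)).filter _
  rw [destStack, List.length_map, ← List.toFinset_card_of_nodup hnodup]
  congr 1
  ext i
  simp

theorem destStack_pairwise_gt (hmono : StrictMonoOn π {i | σ i = j}) :
    (destStack n k π σ j).Pairwise (· > ·) := by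
  rw [destStack, List.pairwise_map]
  have hdecr : ((List.finRange n).reverse.filter (fun i => σ i = j)).Pairwise (· > ·) :=
    (List.pairwise_reverse.mpr (List.pairwise_lt_finRange n)).sublist List.filter_sublist
  refine hdecr.imp_of_mem fun {a b} ha hb hab => ?_
  have hσa : σ a = j := by simpa using List.of_mem_filter ha
  have hσb : σ b = j := by simpa using List.of_mem_filter hb
  exact Fin.lt_def.mp (hmono hσb hσa hab)

end

/-- Conversely: given a partition of `[n]` into independent sets of the permutation
graph of `π` (encoded by the assignment `σ` of containers to stacks), each of size
at most `m`, popping the containers in the order `π n, ..., π 1` and placing `π i`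
onto stack `σ i` is feasible (no destination stack receives more than `m`
containers) and leaves every destination stack sorted strictly decreasingly from
the bottom. -/
theorem stmt10 (n k m : ℕ) (π : Equiv.Perm (Fin n)) (σ : Fin n → Fin k)
    (hindep : ∀ j : Fin k, ∀ u ∈ Finset.univ.filter (fun i' => σ i' = j),
      ∀ v ∈ Finset.univ.filter (fun i' => σ i' = j), ¬ (permGraph n π).Adj u v)
    (hcard : ∀ j : Fin k, (Finset.univ.filter (fun i' => σ i' = j)).card ≤ m) :
    ∀ j : Fin k, (destStack n k π σ j).length ≤ m ∧
      (destStack n k π σ j).Pairwise (· > ·) := by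
  intro j
  have hclass : (permGraph n π).IsIndepSet {i | σ i = j} := fun u hu v hv _ =>
    hindep j u (by simpa using hu) v (by simpa using hv)
  exact ⟨(destStack_length π σ j).trans_le (hcard j),
    destStack_pairwise_gt π σ j (strictMonoOn_of_isIndepSet π hclass)⟩
end

section
/- Combining the two directions: the Mutual Exclusion Scheduling instance (π, k, m) has a solution (a partition of [n] into k independent sets of the permutation graph of π, each of size at most m) if and only if the containers π(1),...,π(n) stacked bottom-to-top in a single stack can be distributed, popping from the top and each container moved exactly once, onto k stacks of capacity m so that every resulting stack is sorted non-increasingly from the bottom. -/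
/-!
A class of the schedule is independent in the permutation graph exactly when `π` is monotone on
it. Destination stack `j` lists the values of `π` on class `j` in decreasing order of position,
so it is sorted non-increasingly exactly when `π` is monotone on that class, and its height is
the size of the class. Hence the same assignment `σ` witnesses both sides.
-/

open Finset

lemma length_destStack (n k : ℕ) (π : Equiv.Perm (Fin n)) (σ : Fin n → Fin k) (j : Fin k) :
    (destStack n k π σ j).length = #{i | σ i = j} := by
  rw [destStack, List.length_map, List.filter_reverse, List.length_reverse,
    ← List.toFinset_card_of_nodup ((List.nodup_finRange n).filter _),
    List.toFinset_filter, List.toFinset_finRange]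
  simp

lemma pairwise_destStack_iff_monotoneOn (n k : ℕ) (π : Equiv.Perm (Fin n)) (σ : Fin n → Fin k)
    (j : Fin k) : (destStack n k π σ j).Pairwise (· ≥ ·) ↔ MonotoneOn π {i | σ i = j} := by
  rw [destStack, List.pairwise_map, List.pairwise_filter, List.pairwise_reverse, ← List.ofFn_id,
    List.pairwise_ofFn, monotoneOn_iff_forall_lt]
  simp only [id, decide_eq_true_eq, ge_iff_le, Fin.val_fin_le, Set.mem_ofPred_eq]
  grind

lemma forall_not_permGraph_adj_iff_monotoneOn (n : ℕ) (π : Equiv.Perm (Fin n))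
    (s : Finset (Fin n)) : (∀ u ∈ s, ∀ v ∈ s, ¬ (permGraph n π).Adj u v) ↔ MonotoneOn π s := by
  simp only [permGraph, not_or, not_and, not_lt, monotoneOn_iff_forall_lt, mem_coe]
  grind

/-- The Mutual Exclusion Scheduling instance `(π, k, m)` has a solution — a
partition of `[n]` into `k` independent sets of the permutation graph of `π`, each
of size at most `m` — iff the containers `π 1, ..., π n` stacked bottom to top in
a single source stack can be distributed (popping from the top, each container
moved exactly once) over `k` destination stacks of capacity `m` so that every
resulting stack is sorted non-increasingly from the bottom. -/
theorem stmt11 (n k m : ℕ) (π : Equiv.Perm (Fin n)) :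
    (∃ σ : Fin n → Fin k,
      (∀ j : Fin k, ∀ u ∈ Finset.univ.filter (fun i' => σ i' = j),
        ∀ v ∈ Finset.univ.filter (fun i' => σ i' = j), ¬ (permGraph n π).Adj u v) ∧
      (∀ j : Fin k, (Finset.univ.filter (fun i' => σ i' = j)).card ≤ m)) ↔
    (∃ σ : Fin n → Fin k, ∀ j : Fin k,
      (destStack n k π σ j).length ≤ m ∧
        (destStack n k π σ j).Pairwise (· ≥ ·)) := by
  refine exists_congr fun σ => ?_
  simp only [length_destStack, pairwise_destStack_iff_monotoneOn,
    forall_not_permGraph_adj_iff_monotoneOn, coe_filter, mem_univ, true_and, forall_and, and_comm]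
end

section
/- In the Configuration Stacking reduction, if container α is directly or transitively below container β in the initial lay-out of a stack, then in any move sequence reaching the target, β must be moved (for the first time) strictly before α is moved; symmetrically, if α is below β in the target lay-out of a stack, then α must be placed at its final position strictly before β is. Consequently, from the stated initial and target lay-outs one derives the chain of inequalities t_{a_i} < t^{(1)}_{π(n−i+1)} < t_{b_i} < t_{c_i} for all i. -/
/-- Container `c` is the container picked up by the `t`-th move of `ms`. -/
def MovedAt {C : Type} {m : ℕ} (ms : List (Fin m × Fin m × C)) (t : ℕ)
    (c : C) : Prop :=
  ∃ h : t < ms.length, (ms.get ⟨t, h⟩).2.2 = c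

/-- `α` is (directly or transitively) below `β` in the stack `X`. -/
def Below {C : Type} (X : List C) (α β : C) : Prop :=
  ∃ p q : Fin X.length, p < q ∧ X.get p = α ∧ X.get q = β

/-!
A move changes only the tops of two stacks, so every move that does not pick up `β` preserves
"`α` is below `β`", read forwards as well as backwards. Since only a top container can be picked
up, `α` cannot move while `β` is still above it, so `β` moves first. For the target lay-out look
at the last move of `β`: `β` never moves again, so whatever lies below `β` at the end already
lay below it just after that move, and a later move of `α` would force another move of `β`.
The Configuration Stacking chain combines both facts, using that `a` and `c` move only once.
-/

section

variable {C : Type} {m h : ℕ}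

theorem below_iff_sublist {X : List C} {α β : C} : Below X α β ↔ [α, β].Sublist X := by
  rw [List.sublist_iff_exists_fin_orderEmbedding_get_eq]
  constructor
  · rintro ⟨p, q, hpq, rfl, rfl⟩
    refine ⟨OrderEmbedding.ofStrictMono ![p, q] ?_, ?_⟩
    · simpa [Fin.strictMono_iff_lt_succ] using hpq
    · intro i; fin_cases i <;> rfl
  · rintro ⟨f, hf⟩
    exact ⟨f ⟨0, by simp⟩, f ⟨1, by simp⟩, f.strictMono (Fin.mk_lt_mk.2 Nat.zero_lt_one),
      (hf _).symm, (hf _).symm⟩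

theorem below_append_singleton_iff {X : List C} {α β c : C} (hβ : β ≠ c) :
    Below (X ++ [c]) α β ↔ Below X α β := by
  rw [below_iff_sublist, below_iff_sublist, ← List.reverse_sublist, List.reverse_append]
  simpa [List.sublist_cons_iff, hβ] using List.reverse_sublist (l₁ := [α, β])

theorem Below.ne {X : List C} {α β : C} (hb : Below X α β) (hX : X.Nodup) : α ≠ β := by
  simpa using (below_iff_sublist.1 hb).nodup hX

def contents (L : Fin m → List C) : Multiset C := ∑ s, (L s : Multiset C)

theorem coe_flatten_ofFn (L : Fin m → List C) :
    ((List.ofFn L).flatten : Multiset C) = contents L := by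
  rw [← Multiset.coe_join, Multiset.join, Multiset.sum_coe, List.map_ofFn, List.sum_ofFn]; rfl

theorem IsMove.contents_eq {L L' : Fin m → List C} {mv : Fin m × Fin m × C}
    (hmv : IsMove m h L L' mv) : contents L' = contents L := by
  obtain ⟨hne, -, hsrc, hdst, hrest⟩ := hmv
  -- adding the moved container to the destination before and to the source after balances
  -- every stack
  have key : ∀ s, (L s : Multiset C) + (if s = mv.2.1 then {mv.2.2} else 0) =
      (L' s : Multiset C) + (if s = mv.1 then {mv.2.2} else 0) := by
    intro s
    by_cases h1 : s = mv.1
    · subst h1; simp [hsrc, hne, ← Multiset.coe_add]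
    by_cases h2 : s = mv.2.1
    · subst h2; simp [hdst, h1, ← Multiset.coe_add]
    · simp [h1, h2, hrest s h1 h2]
  have := Finset.sum_congr rfl fun s (_ : s ∈ Finset.univ) => key s
  simp only [Finset.sum_add_distrib, Finset.sum_ite_eq', Finset.mem_univ, if_true] at this
  exact (add_right_cancel this).symm

theorem nodup_of_nodup_contents {L : Fin m → List C} (hnd : (contents L).Nodup) (s : Fin m) :
    (L s).Nodup :=
  Multiset.coe_nodup.1 <| Multiset.nodup_of_le
    (Finset.single_le_sum (f := fun s => (L s : Multiset C)) (fun _ _ => Multiset.zero_le _)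
      (Finset.mem_univ s)) hnd

theorem eq_of_mem_of_nodup_contents {L : Fin m → List C} (hnd : (contents L).Nodup)
    {s s' : Fin m} {x : C} (hs : x ∈ L s) (hs' : x ∈ L s') : s = s' := by
  by_contra hne
  have hle : (L s : Multiset C) + L s' ≤ contents L := by
    simpa [contents, Finset.sum_pair hne] using
      Finset.sum_le_sum_of_subset (f := fun s => (L s : Multiset C)) (Finset.subset_univ {s, s'})
  exact Multiset.disjoint_left.1
    (Multiset.disjoint_of_nodup_add (Multiset.nodup_of_le hle hnd)) hs hs'

theorem not_below_of_top {L : Fin m → List C} (hnd : (contents L).Nodup) {src s : Fin m}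
    {X : List C} {α β : C} (htop : L src = X ++ [α]) : ¬ Below (L s) α β := by
  intro hb
  obtain rfl : s = src := eq_of_mem_of_nodup_contents hnd
    ((below_iff_sublist.1 hb).subset List.mem_cons_self) (by simp [htop])
  have hX := nodup_of_nodup_contents hnd s
  rw [htop] at hb hX
  have hαX : α ∈ X :=
    (below_iff_sublist.1 ((below_append_singleton_iff (hb.ne hX).symm).1 hb)).subset (by simp)
  exact List.disjoint_of_nodup_append hX hαX (List.mem_singleton_self α)

theorem not_movedAt_nil {t : ℕ} {c : C} : ¬ MovedAt ([] : List (Fin m × Fin m × C)) t c := by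
  simp [MovedAt]

theorem movedAt_cons_zero {mv : Fin m × Fin m × C} {ms : List (Fin m × Fin m × C)} {c : C} :
    MovedAt (mv :: ms) 0 c ↔ mv.2.2 = c := by
  simp [MovedAt]

theorem movedAt_cons_succ {mv : Fin m × Fin m × C} {ms : List (Fin m × Fin m × C)} {t : ℕ}
    {c : C} : MovedAt (mv :: ms) (t + 1) c ↔ MovedAt ms t c := by
  simp [MovedAt]

theorem MovedAt.eq_of_count_eq_one [DecidableEq C] {ms : List (Fin m × Fin m × C)} {t t' : ℕ}
    {c : C} (hc : (ms.map (fun mv => mv.2.2)).count c = 1) (ht : MovedAt ms t c)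
    (ht' : MovedAt ms t' c) : t = t' := by
  have two_le {u u' : ℕ} (hu : MovedAt ms u c) (hu' : MovedAt ms u' c) (hlt : u < u') :
      2 ≤ (ms.map (fun mv => mv.2.2)).count c := by
    obtain ⟨hu, huc⟩ := hu
    obtain ⟨hu', hu'c⟩ := hu'
    have hb : Below (ms.map (fun mv => mv.2.2)) c c :=
      ⟨⟨u, by simpa⟩, ⟨u', by simpa⟩, hlt, by simpa using huc, by simpa using hu'c⟩
    simpa using (below_iff_sublist.1 hb).count_le c
  rcases lt_trichotomy t t' with hlt | heq | hlt
  · have := two_le ht ht' hlt; omega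
  · exact heq
  · have := two_le ht' ht hlt; omega

theorem IsMove.below_iff {L L' : Fin m → List C} {mv : Fin m × Fin m × C}
    (hmv : IsMove m h L L' mv) {s : Fin m} {α β : C} (hβ : mv.2.2 ≠ β) :
    Below (L' s) α β ↔ Below (L s) α β := by
  obtain ⟨-, -, hsrc, hdst, hrest⟩ := hmv
  by_cases h1 : s = mv.1
  · subst h1; rw [hsrc, below_append_singleton_iff (Ne.symm hβ)]
  by_cases h2 : s = mv.2.1
  · subst h2; rw [hdst, below_append_singleton_iff (Ne.symm hβ)]
  rw [hrest s h1 h2]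

theorem Plays.exists_movedAt_lt_of_below {L L' : Fin m → List C}
    {ms : List (Fin m × Fin m × C)} (hp : Plays m h L ms L') (hnd : (contents L).Nodup)
    {s : Fin m} {α β : C} (hb : Below (L s) α β) {tα : ℕ} (hα : MovedAt ms tα α) :
    ∃ tβ, MovedAt ms tβ β ∧ tβ < tα := by
  induction hp generalizing tα with
  | nil => exact absurd hα not_movedAt_nil
  | @cons L L₁ L' mv ms hmv hrest ih =>
    cases tα with
    | zero => exact absurd hb (not_below_of_top hnd (movedAt_cons_zero.1 hα ▸ hmv.2.2.1))
    | succ t =>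
      by_cases hβ : mv.2.2 = β
      · exact ⟨0, movedAt_cons_zero.2 hβ, t.succ_pos⟩
      obtain ⟨tβ, hβ', hlt⟩ :=
        ih (hmv.contents_eq ▸ hnd) ((hmv.below_iff hβ).2 hb) (movedAt_cons_succ.1 hα)
      exact ⟨tβ + 1, movedAt_cons_succ.2 hβ', by omega⟩

theorem Plays.below_of_below_of_not_movedAt {L L' : Fin m → List C}
    {ms : List (Fin m × Fin m × C)} (hp : Plays m h L ms L') {s : Fin m} {α β : C}
    (hβ : ∀ t, ¬ MovedAt ms t β) (hb : Below (L' s) α β) : Below (L s) α β := by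
  induction hp with
  | nil => exact hb
  | cons hmv hrest ih =>
    exact (hmv.below_iff fun h => hβ 0 (movedAt_cons_zero.2 h)).1
      (ih (fun t ht => hβ (t + 1) (movedAt_cons_succ.2 ht)) hb)

theorem Plays.lt_of_below_of_last_movedAt {L L' : Fin m → List C}
    {ms : List (Fin m × Fin m × C)} (hp : Plays m h L ms L') (hnd : (contents L).Nodup)
    {s : Fin m} {α β : C} (hb : Below (L' s) α β) {tα tβ : ℕ} (hα : MovedAt ms tα α)
    (hβ : MovedAt ms tβ β) (hlast : ∀ t, MovedAt ms t β → t ≤ tβ) : tα < tβ := by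
  induction hp generalizing tα tβ with
  | nil => exact absurd hα not_movedAt_nil
  | @cons L L₁ L' mv ms hmv hrest ih =>
    have hnd₁ : (contents L₁).Nodup := hmv.contents_eq ▸ hnd
    cases tβ with
    | zero =>
      have hnot : ∀ t, ¬ MovedAt ms t β := fun t ht => by
        have := hlast (t + 1) (movedAt_cons_succ.2 ht); omega
      have hb₁ := hrest.below_of_below_of_not_movedAt hnot hb
      cases tα with
      | zero =>
        exact absurd ((movedAt_cons_zero.1 hα).symm.trans (movedAt_cons_zero.1 hβ))
          (hb₁.ne (nodup_of_nodup_contents hnd₁ s))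
      | succ t =>
        obtain ⟨t', ht', -⟩ :=
          hrest.exists_movedAt_lt_of_below hnd₁ hb₁ (movedAt_cons_succ.1 hα)
        exact absurd ht' (hnot t')
    | succ tβ =>
      cases tα with
      | zero => exact tβ.succ_pos
      | succ tα =>
        have := ih hnd₁ hb (movedAt_cons_succ.1 hα) (movedAt_cons_succ.1 hβ)
          fun t ht => Nat.le_of_succ_le_succ (hlast (t + 1) (movedAt_cons_succ.2 ht))
        omega

end

theorem stmt15_general {C : Type} [DecidableEq C] (m h : ℕ)
    (L0 Lf : Fin m → List C) (ms : List (Fin m × Fin m × C))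
    (hplay : Plays m h L0 ms Lf)
    (hnodup0 : (List.ofFn L0).flatten.Nodup) :
    (∀ s : Fin m, ∀ α β : C, Below (L0 s) α β →
      ∀ tα, MovedAt ms tα α → ∃ tβ, MovedAt ms tβ β ∧ tβ < tα) ∧
    (∀ s : Fin m, ∀ α β : C, Below (Lf s) α β →
      ∀ tα tβ, MovedAt ms tα α → MovedAt ms tβ β →
        (∀ t, MovedAt ms t α → t ≤ tα) → (∀ t, MovedAt ms t β → t ≤ tβ) →
        tα < tβ) ∧
    (∀ (s s' : Fin m) (g d b node a c : C) (F : List C),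
      L0 s = [g, d, b, node, a] → Lf s' = F ++ [a, b, c] → c ∉ L0 s →
      (ms.map (fun mv => mv.2.2)).count a = 1 →
      (ms.map (fun mv => mv.2.2)).count b = 1 →
      (ms.map (fun mv => mv.2.2)).count c = 1 →
      ∀ ta tnode tb tc, MovedAt ms ta a → MovedAt ms tb b → MovedAt ms tc c →
        MovedAt ms tnode node → (∀ t, MovedAt ms t node → tnode ≤ t) →
        ta < tnode ∧ tnode < tb ∧ tb < tc) := by
  have hnd : (contents L0).Nodup := by
    rw [← coe_flatten_ofFn]; exact Multiset.coe_nodup.2 hnodup0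
  refine ⟨fun s α β hb tα hα => hplay.exists_movedAt_lt_of_below hnd hb hα,
    fun s α β hb tα tβ hα hβ _ hlast =>
      hplay.lt_of_below_of_last_movedAt hnd hb hα hβ hlast, ?_⟩
  intro s s' g d b node a c F hL0 hLf _ hca _ hcc ta tnode tb tc hta htb htc htnode hfirst
  have hna : Below (L0 s) node a :=
    hL0 ▸ below_iff_sublist.2 (List.sublist_append_right [g, d, b] _)
  have hbn : Below (L0 s) b node :=
    hL0 ▸ below_iff_sublist.2
      ((List.sublist_append_right [g, d] [b, node]).trans (List.sublist_append_left _ [a]))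
  have hbc : Below (Lf s') b c :=
    hLf ▸ below_iff_sublist.2
      (((List.Sublist.refl _).cons a).trans (List.sublist_append_right F _))
  obtain ⟨ta', hta', hlt_a⟩ := hplay.exists_movedAt_lt_of_below hnd hna htnode
  obtain ⟨tnode', htnode', hlt_b⟩ := hplay.exists_movedAt_lt_of_below hnd hbn htb
  refine ⟨hta.eq_of_count_eq_one hca hta' ▸ hlt_a, (hfirst _ htnode').trans_lt hlt_b, ?_⟩
  exact hplay.lt_of_below_of_last_movedAt hnd hbc htb htc
    fun t ht => (ht.eq_of_count_eq_one hcc htc).le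

/-- For a move sequence `ms` transforming `L0` into `Lf` (containers pairwise
distinct): (1) if `α` is below `β` in the initial lay-out of a stack, then `β`
is moved (for the first time) strictly before `α` is moved; (2) if `α` is
below `β` in the target lay-out of a stack, then `α` is placed at its final
position (its last move) strictly before `β` is; (3) consequently, for the
Configuration Stacking stacks `s_{1,i}` (initially `[g, d, b, node, a]` bottom
to top) and `s_{3,i-1}` (finally fill containers with `a, b, c` on top, in
that order), one has `t_a < t^{(1)}_{node} < t_b < t_c`. -/
theorem stmt15 {C : Type} [DecidableEq C] (m h : ℕ)
    (L0 Lf : Fin m → List C) (ms : List (Fin m × Fin m × C))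
    (hplay : Plays m h L0 ms Lf)
    (hnodup0 : (List.ofFn L0).flatten.Nodup)
    (hnodupf : (List.ofFn Lf).flatten.Nodup) :
    (∀ s : Fin m, ∀ α β : C, Below (L0 s) α β →
      ∀ tα, MovedAt ms tα α → ∃ tβ, MovedAt ms tβ β ∧ tβ < tα) ∧
    (∀ s : Fin m, ∀ α β : C, Below (Lf s) α β →
      ∀ tα tβ, MovedAt ms tα α → MovedAt ms tβ β →
        (∀ t, MovedAt ms t α → t ≤ tα) → (∀ t, MovedAt ms t β → t ≤ tβ) →
        tα < tβ) ∧
    (∀ (s s' : Fin m) (g d b node a c : C) (F : List C),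
      L0 s = [g, d, b, node, a] → Lf s' = F ++ [a, b, c] → c ∉ L0 s →
      (ms.map (fun mv => mv.2.2)).count a = 1 →
      (ms.map (fun mv => mv.2.2)).count b = 1 →
      (ms.map (fun mv => mv.2.2)).count c = 1 →
      ∀ ta tnode tb tc, MovedAt ms ta a → MovedAt ms tb b → MovedAt ms tc c →
        MovedAt ms tnode node → (∀ t, MovedAt ms t node → tnode ≤ t) →
        ta < tnode ∧ tnode < tb ∧ tb < tc) :=
  stmt15_general m h L0 Lf ms hplay hnodup0
end
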